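/- arXiv:math/0006014 — 3 statements merged into one kernel-verified Lean document; each statement's English description precedes it below -/
import Mathlib

section
/- Let K be a normal subgroup of a group G. Let ι: ℤ[K] → ℤ[G] be the ring homomorphism induced by the inclusion K ↪ G, and let J be the two-sided ideal of ℤ[G] generated by {k − 1 : k ∈ K}. Then for every d ≥ 1, the d-th power J^d equals the ℤ-submodule of ℤ[G] spanned by products x·y with x ∈ ℤ[G] and y ∈ ι(I(K)^d); this submodule moreover equals the ℤ-submodule spanned by products y·x with y ∈ ι(I(K)^d), x ∈ ℤ[G], and equals the ℤ-submodule spanned by products x·y·x′ with x, x′ ∈ ℤ[G] and y ∈ ι(I(K)^d). -/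
noncomputable section

/-- The augmentation homomorphism `ℤ[G] → ℤ` sending every group element to `1`. -/
def aug (G : Type*) [Group G] : MonoidAlgebra ℤ G →ₐ[ℤ] ℤ :=
  MonoidAlgebra.lift ℤ ℤ G 1

/-- The augmentation ideal `I(G)` of `ℤ[G]`, as a `ℤ`-submodule. -/
def augIdeal (G : Type*) [Group G] : Submodule ℤ (MonoidAlgebra ℤ G) :=
  (RingHom.ker (aug G).toRingHom).restrictScalars ℤ

/-- Powers of a `ℤ`-submodule of a `ℤ`-algebra, with the convention `N ^ 0 = ⊤`. -/
def spow {A : Type*} [Ring A] (N : Submodule ℤ A) : ℕ → Submodule ℤ A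
  | 0 => ⊤
  | d + 1 => N * spow N d

/-- The two-sided ideal of `ℤ[G]` generated by `{k - 1 : k ∈ K}`, as a `ℤ`-submodule. -/
def twoSidedAug {G : Type*} [Group G] (K : Subgroup G) : Submodule ℤ (MonoidAlgebra ℤ G) :=
  Submodule.span ℤ
    {x | ∃ (a b : MonoidAlgebra ℤ G) (k : G), k ∈ K ∧
      x = a * (MonoidAlgebra.of ℤ G k - 1) * b}

/-- The ring homomorphism `ℤ[K] → ℤ[G]` induced by the inclusion of a subgroup `K ↪ G`. -/
def iota {G : Type*} [Group G] (K : Subgroup G) :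
    MonoidAlgebra ℤ K →+* MonoidAlgebra ℤ G :=
  MonoidAlgebra.mapDomainRingHom ℤ K.subtype

/-!
Let `P ⊆ ℤ[G]` be the `ℤ`-span of the elements `k - 1` (`k ∈ K`); it is the image `ι(I(K))`, and
`ι(I(K)^d) = P^d`. Since `K` is normal, `g (k - 1) g⁻¹ = g k g⁻¹ - 1` keeps `P` stable under
conjugation by group elements, which gives `⊤ * P = P * ⊤` and then `⊤ * P^d = P^d * ⊤` for all `d`.
Hence `J = ⊤ * P * ⊤ = ⊤ * P`, and for `d ≥ 1` all of `J^d`, `⊤ * P^d`, `P^d * ⊤` and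
`⊤ * P^d * ⊤` coincide; these three products are the three spans in the statement.
-/

open MonoidAlgebra Submodule

namespace Submodule

variable {R A B : Type*} [CommSemiring R] [Semiring A] [Algebra R A] [Semiring B] [Algebra R B]

theorem top_mul_top : (⊤ : Submodule R A) * ⊤ = ⊤ :=
  top_le_iff.1 fun x _ => by simpa using mul_mem_mul (mem_top (x := x)) (mem_top (x := (1 : A)))

theorem pow_mul_top_of_mul_top {N : Submodule R A} (h : N * ⊤ = N) {n : ℕ} (hn : 1 ≤ n) :
    N ^ n * ⊤ = N ^ n := by
  obtain ⟨m, rfl⟩ := Nat.exists_eq_add_of_le' hn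
  rw [pow_succ, mul_assoc, h]

variable {P : Submodule R A}

theorem top_mul_pow_comm (h : ⊤ * P = P * ⊤) (n : ℕ) : ⊤ * P ^ n = P ^ n * ⊤ := by
  induction n with
  | zero => simp
  | succ n ih => rw [pow_succ', ← mul_assoc, h, mul_assoc, ih, ← mul_assoc]

theorem top_mul_pow (h : ⊤ * P = P * ⊤) {n : ℕ} (hn : 1 ≤ n) : (⊤ * P) ^ n = ⊤ * P ^ n := by
  induction n, hn using Nat.le_induction with
  | base => simp
  | succ n hn ih =>
    rw [pow_succ, ih, mul_assoc, ← mul_assoc (P ^ n), ← top_mul_pow_comm h]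
    simp only [← mul_assoc, top_mul_top]
    rw [mul_assoc, ← pow_succ]

theorem top_mul_map_eq_span (f : B →ₐ[R] A) (N : Submodule R B) :
    ⊤ * N.map f.toLinearMap = span R {z | ∃ (x : A) (y : B), y ∈ N ∧ z = x * f y} := by
  rw [← span_univ, ← span_eq (N.map f.toLinearMap), span_mul_span]
  congr 1
  ext z
  constructor
  · rintro ⟨x, -, _, ⟨y, hy, rfl⟩, rfl⟩
    exact ⟨x, y, hy, rfl⟩
  · rintro ⟨x, y, hy, rfl⟩
    exact ⟨x, trivial, _, ⟨y, hy, rfl⟩, rfl⟩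

theorem map_mul_top_eq_span (f : B →ₐ[R] A) (N : Submodule R B) :
    N.map f.toLinearMap * ⊤ = span R {z | ∃ (x : A) (y : B), y ∈ N ∧ z = f y * x} := by
  rw [← span_univ, ← span_eq (N.map f.toLinearMap), span_mul_span]
  congr 1
  ext z
  constructor
  · rintro ⟨_, ⟨y, hy, rfl⟩, x, -, rfl⟩
    exact ⟨x, y, hy, rfl⟩
  · rintro ⟨x, y, hy, rfl⟩
    exact ⟨_, ⟨y, hy, rfl⟩, x, trivial, rfl⟩

theorem top_mul_map_mul_top_eq_span (f : B →ₐ[R] A) (N : Submodule R B) :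
    ⊤ * N.map f.toLinearMap * ⊤ =
      span R {z | ∃ (x x' : A) (y : B), y ∈ N ∧ z = x * f y * x'} := by
  rw [← span_univ, ← span_eq (N.map f.toLinearMap), span_mul_span, span_mul_span]
  congr 1
  ext z
  constructor
  · rintro ⟨_, ⟨x, -, _, ⟨y, hy, rfl⟩, rfl⟩, x', -, rfl⟩
    exact ⟨x, x', y, hy, rfl⟩
  · rintro ⟨x, x', y, hy, rfl⟩
    exact ⟨_, ⟨x, trivial, _, ⟨y, hy, rfl⟩, rfl⟩, x', trivial, rfl⟩

end Submodule

namespace MonoidAlgebra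

variable {R G : Type*} [CommSemiring R] [Group G] {P : Submodule R (MonoidAlgebra R G)}

theorem top_mul_le_mul_top_of_conj (hP : ∀ g, ∀ p ∈ P, of R G g * p * of R G g⁻¹ ∈ P) :
    ⊤ * P ≤ P * ⊤ := by
  refine mul_le.2 fun x hx p hp => ?_
  clear hx
  induction x using MonoidAlgebra.induction_on with
  | of g =>
    have : of R G g * p = (of R G g * p * of R G g⁻¹) * of R G g := by
      rw [mul_assoc _ (of R G g⁻¹), ← map_mul, inv_mul_cancel, map_one, mul_one]
    rw [this]
    exact mul_mem_mul (hP g p hp) mem_top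
  | add x y hx hy => rw [add_mul]; exact add_mem hx hy
  | smul r x hx => rw [smul_mul_assoc]; exact smul_mem _ r hx

theorem mul_top_le_top_mul_of_conj (hP : ∀ g, ∀ p ∈ P, of R G g * p * of R G g⁻¹ ∈ P) :
    P * ⊤ ≤ ⊤ * P := by
  refine mul_le.2 fun p hp x hx => ?_
  clear hx
  induction x using MonoidAlgebra.induction_on with
  | of g =>
    have : p * of R G g = of R G g * (of R G g⁻¹ * p * of R G g⁻¹⁻¹) := by
      rw [inv_inv, ← mul_assoc, ← mul_assoc, ← map_mul, mul_inv_cancel, map_one, one_mul]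
    rw [this]
    exact mul_mem_mul mem_top (hP g⁻¹ p hp)
  | add x y hx hy => rw [mul_add]; exact add_mem hx hy
  | smul r x hx => rw [mul_smul_comm]; exact smul_mem _ r hx

theorem top_mul_eq_mul_top_of_conj (hP : ∀ g, ∀ p ∈ P, of R G g * p * of R G g⁻¹ ∈ P) :
    ⊤ * P = P * ⊤ :=
  le_antisymm (top_mul_le_mul_top_of_conj hP) (mul_top_le_top_mul_of_conj hP)

end MonoidAlgebra

section AugmentationIdeal

variable {G : Type*} [Group G]

theorem sub_aug_smul_one_mem_span (y : MonoidAlgebra ℤ G) :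
    y - aug G y • 1 ∈ span ℤ (Set.range fun g => of ℤ G g - 1) := by
  induction y using MonoidAlgebra.induction_on with
  | of g => simpa [aug] using subset_span (s := Set.range fun g => of ℤ G g - 1) ⟨g, rfl⟩
  | add x y hx hy => simpa [add_smul, add_sub_add_comm] using add_mem hx hy
  | smul r x hx => simpa [smul_sub, mul_smul] using smul_mem _ r hx

theorem augIdeal_eq_span : augIdeal G = span ℤ (Set.range fun g => of ℤ G g - 1) := by
  refine le_antisymm (fun y hy => ?_) (span_le.2 ?_)
  · simpa [show aug G y = 0 from hy] using sub_aug_smul_one_mem_span y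
  · rintro _ ⟨g, rfl⟩
    show aug G (of ℤ G g - 1) = 0
    simp [aug]

theorem augIdeal_mul_top : augIdeal G * ⊤ = augIdeal G := by
  refine le_antisymm (mul_le.2 fun a ha b _ => ?_) fun a ha => ?_
  · show aug G (a * b) = 0
    rw [map_mul, show aug G a = 0 from ha, zero_mul]
  · simpa using mul_mem_mul ha (mem_top (x := (1 : MonoidAlgebra ℤ G)))

variable (K : Subgroup G)

/-- `iota K` as a `ℤ`-algebra map, so that `Submodule.map_pow` applies to it. -/
def iotaAlgHom : MonoidAlgebra ℤ K →ₐ[ℤ] MonoidAlgebra ℤ G :=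
  mapDomainAlgHom ℤ ℤ K.subtype

theorem map_iota_augIdeal :
    (augIdeal K).map (iotaAlgHom K).toLinearMap =
      span ℤ (Set.range fun k : K => of ℤ G k - 1) := by
  rw [augIdeal_eq_span, map_span, ← Set.range_comp]
  congr 1
  exact congrArg Set.range (funext fun k => by
    simp only [Function.comp_apply, AlgHom.toLinearMap_apply, map_sub, map_one]
    simp [iotaAlgHom])

theorem twoSidedAug_eq_top_mul_span_mul_top :
    twoSidedAug K = ⊤ * span ℤ (Set.range fun k : K => of ℤ G k - 1) * ⊤ := by
  rw [← span_univ, span_mul_span, span_mul_span, twoSidedAug]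
  congr 1
  ext z
  constructor
  · rintro ⟨a, b, k, hk, rfl⟩
    exact ⟨_, ⟨a, trivial, _, ⟨⟨k, hk⟩, rfl⟩, rfl⟩, b, trivial, rfl⟩
  · rintro ⟨_, ⟨a, -, _, ⟨k, rfl⟩, rfl⟩, b, -, rfl⟩
    exact ⟨a, b, k, k.2, rfl⟩

variable {K}

theorem of_mul_mul_of_inv_mem_span (hK : K.Normal) (g : G) {p : MonoidAlgebra ℤ G}
    (hp : p ∈ span ℤ (Set.range fun k : K => of ℤ G k - 1)) :
    of ℤ G g * p * of ℤ G g⁻¹ ∈ span ℤ (Set.range fun k : K => of ℤ G k - 1) := by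
  induction hp using span_induction with
  | mem p hp =>
    obtain ⟨k, rfl⟩ := hp
    refine subset_span ⟨⟨g * k * g⁻¹, hK.conj_mem k k.2 g⟩, ?_⟩
    simp [mul_sub, sub_mul, one_def]
  | zero => simp
  | add x y _ _ hx hy => rw [mul_add, add_mul]; exact add_mem hx hy
  | smul r x _ hx => rw [mul_smul_comm, smul_mul_assoc]; exact smul_mem _ r hx

end AugmentationIdeal

theorem spow_eq_pow_mul_top {A : Type*} [Ring A] (N : Submodule ℤ A) (d : ℕ) :
    spow N d = N ^ d * ⊤ := by
  induction d with
  | zero => simp [spow]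
  | succ d ih => rw [spow, ih, pow_succ', mul_assoc]

/-- If `K` is a normal subgroup of `G` and `J` is the two-sided ideal of
`ℤ[G]` generated by `{k - 1 : k ∈ K}`, then for every `d ≥ 1` the power `J ^ d` equals the
`ℤ`-span of the products `x * ι(y)` with `y ∈ I(K)^d`, which also equals the `ℤ`-span of the
products `ι(y) * x`, and the `ℤ`-span of the products `x * ι(y) * x'`. -/
theorem statement1 {G : Type*} [Group G] (K : Subgroup G) (hK : K.Normal)
    (d : ℕ) (hd : 1 ≤ d) :
    spow (twoSidedAug K) d =
      Submodule.span ℤ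
        {z | ∃ (x : MonoidAlgebra ℤ G) (y : MonoidAlgebra ℤ K),
          y ∈ spow (augIdeal K) d ∧ z = x * iota K y} ∧
    spow (twoSidedAug K) d =
      Submodule.span ℤ
        {z | ∃ (x : MonoidAlgebra ℤ G) (y : MonoidAlgebra ℤ K),
          y ∈ spow (augIdeal K) d ∧ z = iota K y * x} ∧
    spow (twoSidedAug K) d =
      Submodule.span ℤ
        {z | ∃ (x x' : MonoidAlgebra ℤ G) (y : MonoidAlgebra ℤ K),
          y ∈ spow (augIdeal K) d ∧ z = x * iota K y * x'} := by
  set P := span ℤ (Set.range fun k : K => of ℤ G k - 1)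
  have hP : ⊤ * P = P * ⊤ :=
    top_mul_eq_mul_top_of_conj fun g _ hp => of_mul_mul_of_inv_mem_span hK g hp
  have hI : (spow (augIdeal K) d).map (iotaAlgHom K).toLinearMap = P ^ d := by
    rw [spow_eq_pow_mul_top, pow_mul_top_of_mul_top (augIdeal_mul_top (G := K)) hd,
      Submodule.map_pow, map_iota_augIdeal]
  have hJ : spow (twoSidedAug K) d = ⊤ * P ^ d := by
    rw [spow_eq_pow_mul_top, twoSidedAug_eq_top_mul_span_mul_top, mul_assoc ⊤, ← hP,
      ← mul_assoc, top_mul_top, top_mul_pow hP hd, top_mul_pow_comm hP, mul_assoc, top_mul_top]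
  refine ⟨?_, ?_, ?_⟩
  · rw [hJ, ← hI, top_mul_map_eq_span]; rfl
  · rw [hJ, top_mul_pow_comm hP, ← hI, map_mul_top_eq_span]; rfl
  · rw [hJ, ← top_mul_top, mul_assoc, top_mul_pow_comm hP, ← mul_assoc, ← hI,
      top_mul_map_mul_top_eq_span]; rfl
end
end

section
/- Fix a group Γ and an integer n ≥ 3, and let ρ̃_n: L_n(Γ) → L_{n−1}(Γ) be the Lie algebra homomorphism determined by ρ̃_n(t_{1,j,γ}) = 0 for 2 ≤ j ≤ n and ρ̃_n(t_{i,j,γ}) = t_{i−1,j−1,γ} for i, j ∈ {2,…,n}, i ≠ j. Then the kernel of ρ̃_n equals the Lie subalgebra of L_n(Γ) generated by the set {t_{1,j,γ} : 2 ≤ j ≤ n, γ ∈ Γ}. -/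
/-!
The Lie subalgebra `K` spanned by the `t_{1,j,γ}` is an ideal: bracketing any generator
`t_{i,j,γ}` with `t_{1,l,δ}` gives either zero (L2) or, via (L1) and (L3), a bracket of two
elements `t_{1,·,·}`. The shift `t_{i,j,γ} ↦ t_{i+1,j+1,γ}` respects the relations, so it defines
`σ : L_{n-1}(Γ) → L_n(Γ)`, and `σ ∘ ρ̃` agrees with the identity modulo `K` on every generator.
Hence `x ≡ σ (ρ̃ x) = 0` modulo `K` for `x ∈ ker ρ̃`; conversely `ρ̃` kills the generators of `K`.
-/

noncomputable section

/-- Index type for the generators `t_{i,j,γ}`: pairs of distinct indices together with a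
group element label. -/
def Idx (n : ℕ) (Γ : Type*) : Type _ := {p : Fin n × Fin n × Γ // p.1 ≠ p.2.1}

/-- The generator `t_{i,j,γ}` of the free Lie algebra. -/
def flGen (n : ℕ) (Γ : Type*) (i j : Fin n) (γ : Γ) (h : i ≠ j) :
    FreeLieAlgebra ℤ (Idx n Γ) :=
  FreeLieAlgebra.of ℤ ⟨(i, j, γ), h⟩

/-- The set of relators (L1), (L2), (L3) defining `L_n(Γ)`. -/
def lieRels (n : ℕ) (Γ : Type*) [Group Γ] : Set (FreeLieAlgebra ℤ (Idx n Γ)) :=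
  {x | ∃ (i j : Fin n) (γ : Γ) (h : i ≠ j),
      x = flGen n Γ i j γ h - flGen n Γ j i γ⁻¹ h.symm} ∪
  {x | ∃ (i j k l : Fin n) (γ δ : Γ) (hij : i ≠ j) (hkl : k ≠ l),
      i ≠ k ∧ i ≠ l ∧ j ≠ k ∧ j ≠ l ∧
      x = ⁅flGen n Γ i j γ hij, flGen n Γ k l δ hkl⁆} ∪
  {x | ∃ (i j k : Fin n) (γ δ : Γ) (hij : i ≠ j) (hjk : j ≠ k) (hik : i ≠ k),
      x = ⁅flGen n Γ i j γ hij, flGen n Γ j k δ hjk + flGen n Γ i k (γ * δ) hik⁆}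

/-- The Lie ideal generated by the relators. -/
def lieRelIdeal (n : ℕ) (Γ : Type*) [Group Γ] :
    LieIdeal ℤ (FreeLieAlgebra ℤ (Idx n Γ)) :=
  LieSubmodule.lieSpan ℤ (FreeLieAlgebra ℤ (Idx n Γ)) (lieRels n Γ)

/-- The Lie algebra `L_n(Γ)` over `ℤ`. -/
abbrev Ln (n : ℕ) (Γ : Type*) [Group Γ] :=
  FreeLieAlgebra ℤ (Idx n Γ) ⧸ lieRelIdeal n Γ

/-- The generator `t_{i,j,γ}` of `L_n(Γ)`. -/
def tL (n : ℕ) (Γ : Type*) [Group Γ] (i j : Fin n) (γ : Γ) (h : i ≠ j) : Ln n Γ :=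
  LieSubmodule.Quotient.mk' (lieRelIdeal n Γ) (flGen n Γ i j γ h)


open LieSubalgebra

namespace LieHom

variable {R L L' : Type*} [CommRing R] [LieRing L] [LieAlgebra R L] [LieRing L'] [LieAlgebra R L']

theorem eqOn_lieSpan {f g : L →ₗ⁅R⁆ L'} {s : Set L} (h : Set.EqOn f g s) :
    Set.EqOn f g (lieSpan R L s) := by
  intro x hx
  induction hx using lieSpan_induction with
  | mem x hx => exact h hx
  | zero => simp
  | add x y _ _ hx hy => simp [hx, hy]
  | smul r x _ hx => simp [hx]
  | lie x y _ _ hx hy => simp [hx, hy]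

theorem ext_of_lieSpan_eq_top {f g : L →ₗ⁅R⁆ L'} {s : Set L} (hs : lieSpan R L s = ⊤)
    (h : Set.EqOn f g s) : f = g :=
  LieHom.ext fun _ => eqOn_lieSpan h (hs ▸ mem_top _)

end LieHom

namespace LieSubalgebra

variable {R L : Type*} [CommRing R] [LieRing L] [LieAlgebra R L]

theorem normalizer_lieSpan_eq_top {s t : Set L} (ht : lieSpan R L t = ⊤)
    (h : ∀ x ∈ t, ∀ y ∈ s, ⁅x, y⁆ ∈ lieSpan R L s) : (lieSpan R L s).normalizer = ⊤ := by
  rw [eq_top_iff, ← ht, lieSpan_le]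
  intro x hx
  rw [SetLike.mem_coe, mem_normalizer_iff]
  intro y hy
  induction hy using lieSpan_induction with
  | mem y hy => exact h x hx y hy
  | zero => simp
  | add y z _ _ hy hz => simpa only [lie_add] using add_mem hy hz
  | smul r y _ hy => simpa only [lie_smul] using SMulMemClass.smul_mem r hy
  | lie y z hy' hz' hy hz =>
    rw [leibniz_lie]
    exact add_mem (lie_mem _ hy hz') (lie_mem _ hy' hz)

end LieSubalgebra

namespace LieIdeal

variable {R L L' : Type*} [CommRing R] [LieRing L] [LieAlgebra R L] [LieRing L'] [LieAlgebra R L']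
variable (I : LieIdeal R L)

def mkQ : L →ₗ⁅R⁆ L ⧸ I :=
  { LieSubmodule.Quotient.mk' I with map_lie' := rfl }

theorem mkQ_surjective : Function.Surjective I.mkQ :=
  LieSubmodule.Quotient.surjective_mk' I

theorem mkQ_eq_zero {x : L} : I.mkQ x = 0 ↔ x ∈ I :=
  LieSubmodule.Quotient.mk_eq_zero I

def liftQ (f : L →ₗ⁅R⁆ L') (h : I ≤ f.ker) : L ⧸ I →ₗ⁅R⁆ L' :=
  { I.toSubmodule.liftQ f.toLinearMap (fun x hx => (LieHom.mem_ker).1 (h hx)) with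
    map_lie' := by
      rintro ⟨x⟩ ⟨y⟩
      exact f.map_lie x y }

end LieIdeal
namespace Ln

open FreeLieAlgebra

variable {Γ : Type*} [Group Γ] {n : ℕ}

@[simp]
theorem mkQ_flGen (i j : Fin n) (γ : Γ) (h : i ≠ j) :
    (lieRelIdeal n Γ).mkQ (flGen n Γ i j γ h) = tL n Γ i j γ h :=
  rfl

theorem mkQ_eq_zero_of_mem_lieRels {x : FreeLieAlgebra ℤ (Idx n Γ)} (hx : x ∈ lieRels n Γ) :
    (lieRelIdeal n Γ).mkQ x = 0 :=
  (LieIdeal.mkQ_eq_zero _).2 (LieSubmodule.subset_lieSpan hx)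

theorem tL_symm (i j : Fin n) (γ : Γ) (h : i ≠ j) :
    tL n Γ i j γ h = tL n Γ j i γ⁻¹ h.symm :=
  sub_eq_zero.1 <| by
    simpa only [map_sub, mkQ_flGen] using
      mkQ_eq_zero_of_mem_lieRels (Or.inl (Or.inl ⟨i, j, γ, h, rfl⟩))

theorem tL_lie_tL_eq_zero {i j k l : Fin n} (γ δ : Γ) (hij : i ≠ j) (hkl : k ≠ l)
    (hik : i ≠ k) (hil : i ≠ l) (hjk : j ≠ k) (hjl : j ≠ l) :
    ⁅tL n Γ i j γ hij, tL n Γ k l δ hkl⁆ = 0 := by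
  simpa only [LieHom.map_lie, mkQ_flGen] using mkQ_eq_zero_of_mem_lieRels
    (Or.inl (Or.inr ⟨i, j, k, l, γ, δ, hij, hkl, hik, hil, hjk, hjl, rfl⟩))

theorem tL_lie_tL_eq_neg {i j k : Fin n} (γ δ : Γ) (hij : i ≠ j) (hjk : j ≠ k) (hik : i ≠ k) :
    ⁅tL n Γ i j γ hij, tL n Γ j k δ hjk⁆ = -⁅tL n Γ i j γ hij, tL n Γ i k (γ * δ) hik⁆ := by
  refine eq_neg_of_add_eq_zero_left ?_
  simpa only [LieHom.map_lie, map_add, lie_add, mkQ_flGen] using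
    mkQ_eq_zero_of_mem_lieRels (Or.inr ⟨i, j, k, γ, δ, hij, hjk, hik, rfl⟩)

theorem lieSpan_tL_eq_top :
    lieSpan ℤ (Ln n Γ) {y | ∃ (i j : Fin n) (γ : Γ) (h : i ≠ j), y = tL n Γ i j γ h} = ⊤ := by
  set P := lieSpan ℤ (Ln n Γ) {y | ∃ (i j : Fin n) (γ : Γ) (h : i ≠ j), y = tL n Γ i j γ h}
  let g : FreeLieAlgebra ℤ (Idx n Γ) →ₗ⁅ℤ⁆ P := lift ℤ fun p =>
    ⟨tL n Γ p.1.1 p.1.2.1 p.1.2.2 p.2, subset_lieSpan ⟨_, _, _, _, rfl⟩⟩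
  have hg : P.incl.comp g = (lieRelIdeal n Γ).mkQ :=
    FreeLieAlgebra.hom_ext fun p => congrArg Subtype.val (lift_of_apply _ p)
  refine eq_top_iff.2 fun x _ => ?_
  obtain ⟨z, rfl⟩ := LieIdeal.mkQ_surjective _ x
  have hz : (g z : Ln n Γ) = (lieRelIdeal n Γ).mkQ z := LieHom.congr_fun hg z
  exact hz ▸ (g z).2

theorem hom_ext {L : Type*} [LieRing L] [LieAlgebra ℤ L] {f g : Ln n Γ →ₗ⁅ℤ⁆ L}
    (h : ∀ (i j : Fin n) (γ : Γ) (hij : i ≠ j), f (tL n Γ i j γ hij) = g (tL n Γ i j γ hij)) :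
    f = g :=
  LieHom.ext_of_lieSpan_eq_top lieSpan_tL_eq_top <| by
    rintro _ ⟨i, j, γ, hij, rfl⟩
    exact h i j γ hij

variable {m : ℕ}

def mapFree (e : Fin m ↪ Fin n) : FreeLieAlgebra ℤ (Idx m Γ) →ₗ⁅ℤ⁆ Ln n Γ :=
  lift ℤ fun p => tL n Γ (e p.1.1) (e p.1.2.1) p.1.2.2 (e.injective.ne p.2)

theorem mapFree_flGen (e : Fin m ↪ Fin n) (i j : Fin m) (γ : Γ) (h : i ≠ j) :
    mapFree e (flGen m Γ i j γ h) = tL n Γ (e i) (e j) γ (e.injective.ne h) :=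
  lift_of_apply _ _

theorem lieRelIdeal_le_ker_mapFree (e : Fin m ↪ Fin n) :
    lieRelIdeal m Γ ≤ (mapFree (Γ := Γ) e).ker := by
  rw [lieRelIdeal, LieSubmodule.lieSpan_le]
  rintro x (((⟨i, j, γ, h, rfl⟩ | ⟨i, j, k, l, γ, δ, hij, hkl, hik, hil, hjk, hjl, rfl⟩) |
    ⟨i, j, k, γ, δ, hij, hjk, hik, rfl⟩)) <;>
    simp only [SetLike.mem_coe, LieHom.mem_ker, map_sub, map_add, LieHom.map_lie, lie_add,
      mapFree_flGen]
  · exact sub_eq_zero.2 (tL_symm _ _ _ _)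
  · exact tL_lie_tL_eq_zero _ _ _ _ (e.injective.ne hik) (e.injective.ne hil)
      (e.injective.ne hjk) (e.injective.ne hjl)
  · rw [tL_lie_tL_eq_neg _ _ _ _ (e.injective.ne hik), neg_add_cancel]

def map (e : Fin m ↪ Fin n) : Ln m Γ →ₗ⁅ℤ⁆ Ln n Γ :=
  (lieRelIdeal m Γ).liftQ (mapFree e) (lieRelIdeal_le_ker_mapFree e)

theorem map_tL (e : Fin m ↪ Fin n) (i j : Fin m) (γ : Γ) (h : i ≠ j) :
    map e (tL m Γ i j γ h) = tL n Γ (e i) (e j) γ (e.injective.ne h) :=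
  mapFree_flGen e i j γ h

def rowGens (k : Fin n) : Set (Ln n Γ) :=
  {y | ∃ (j : Fin n) (hkj : k ≠ j) (γ : Γ), y = tL n Γ k j γ hkj}

theorem tL_lie_tL_mem_lieSpan_rowGens_of_eq {k i j : Fin n} (γ δ : Γ) (hij : i ≠ j)
    (hki : k ≠ i) (hkj : k ≠ j) :
    ⁅tL n Γ i j γ hij, tL n Γ k i δ hki⁆ ∈ lieSpan ℤ (Ln n Γ) (rowGens k) := by
  rw [← lie_skew, tL_lie_tL_eq_neg δ γ hki hij hkj, neg_neg]
  exact lie_mem _ (subset_lieSpan ⟨i, hki, δ, rfl⟩) (subset_lieSpan ⟨j, hkj, δ * γ, rfl⟩)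

theorem tL_lie_tL_mem_lieSpan_rowGens {k i j l : Fin n} (γ δ : Γ) (hij : i ≠ j) (hkl : k ≠ l) :
    ⁅tL n Γ i j γ hij, tL n Γ k l δ hkl⁆ ∈ lieSpan ℤ (Ln n Γ) (rowGens k) := by
  obtain rfl | hik := eq_or_ne i k
  · exact lie_mem _ (subset_lieSpan ⟨j, hij, γ, rfl⟩) (subset_lieSpan ⟨l, hkl, δ, rfl⟩)
  obtain rfl | hjk := eq_or_ne j k
  · rw [tL_symm]
    exact lie_mem _ (subset_lieSpan ⟨i, hij.symm, γ⁻¹, rfl⟩) (subset_lieSpan ⟨l, hkl, δ, rfl⟩)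
  obtain rfl | hil := eq_or_ne i l
  · exact tL_lie_tL_mem_lieSpan_rowGens_of_eq γ δ hij hkl hjk.symm
  obtain rfl | hjl := eq_or_ne j l
  · rw [tL_symm]
    exact tL_lie_tL_mem_lieSpan_rowGens_of_eq γ⁻¹ δ hij.symm hkl hik.symm
  rw [tL_lie_tL_eq_zero γ δ hij hkl hik hil hjk hjl]
  exact zero_mem _

theorem normalizer_lieSpan_rowGens (k : Fin n) :
    (lieSpan ℤ (Ln n Γ) (rowGens k)).normalizer = ⊤ :=
  normalizer_lieSpan_eq_top lieSpan_tL_eq_top <| by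
    rintro _ ⟨i, j, γ, hij, rfl⟩ _ ⟨l, hkl, δ, rfl⟩
    exact tL_lie_tL_mem_lieSpan_rowGens γ δ hij hkl

theorem exists_lieIdeal_coe_eq_lieSpan_rowGens (k : Fin n) :
    ∃ I : LieIdeal ℤ (Ln n Γ), ↑I = lieSpan ℤ (Ln n Γ) (rowGens k) :=
  (exists_lieIdeal_coe_eq_iff ℤ _).2 fun x y hy =>
    (mem_normalizer_iff _ x).1 ((normalizer_lieSpan_rowGens (Γ := Γ) k).symm ▸ mem_top x) y hy

theorem mkQ_comp_map_succEmb_comp (ρ : Ln (m + 1) Γ →ₗ⁅ℤ⁆ Ln m Γ)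
    (hρ0 : ∀ (j : Fin (m + 1)) (hj : (0 : Fin (m + 1)) ≠ j) (γ : Γ),
      ρ (tL (m + 1) Γ 0 j γ hj) = 0)
    (hρsucc : ∀ (i j : Fin m) (hij : i ≠ j) (γ : Γ),
      ρ (tL (m + 1) Γ i.succ j.succ γ (fun h => hij (Fin.succ_injective m h))) =
        tL m Γ i j γ hij)
    (I : LieIdeal ℤ (Ln (m + 1) Γ)) (hI : rowGens 0 ⊆ (I : Set (Ln (m + 1) Γ))) :
    I.mkQ.comp ((map (Fin.succEmb m)).comp ρ) = I.mkQ := by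
  have hrow (j : Fin (m + 1)) (hj : 0 ≠ j) (γ : Γ) : I.mkQ (tL (m + 1) Γ 0 j γ hj) = 0 :=
    (I.mkQ_eq_zero).2 (hI ⟨j, hj, γ, rfl⟩)
  refine hom_ext fun i j γ hij => ?_
  obtain rfl | ⟨i, rfl⟩ := Fin.eq_zero_or_eq_succ i
  · simp [hρ0, hrow]
  obtain rfl | ⟨j, rfl⟩ := Fin.eq_zero_or_eq_succ j
  · simp [tL_symm _ 0, hρ0, hrow]
  have hij' : i ≠ j := fun h => hij (congrArg Fin.succ h)
  simp [hρsucc i j hij', map_tL]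

end Ln

theorem statement8_general (Γ : Type*) [Group Γ] (m : ℕ)
    (ρ : Ln (m + 1) Γ →ₗ⁅ℤ⁆ Ln m Γ)
    (hρ0 : ∀ (j : Fin (m + 1)) (hj : (0 : Fin (m + 1)) ≠ j) (γ : Γ),
      ρ (tL (m + 1) Γ 0 j γ hj) = 0)
    (hρsucc : ∀ (i j : Fin m) (hij : i ≠ j) (γ : Γ),
      ρ (tL (m + 1) Γ i.succ j.succ γ (fun h => hij (Fin.succ_injective m h))) =
        tL m Γ i j γ hij) :
    ∀ x : Ln (m + 1) Γ,
      x ∈ ρ.ker ↔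
        x ∈ LieSubalgebra.lieSpan ℤ (Ln (m + 1) Γ)
          {y | ∃ (j : Fin (m + 1)) (hj : (0 : Fin (m + 1)) ≠ j) (γ : Γ),
            y = tL (m + 1) Γ 0 j γ hj} := by
  intro x
  change x ∈ ρ.ker ↔ x ∈ lieSpan ℤ _ (Ln.rowGens 0)
  obtain ⟨I, hI⟩ := Ln.exists_lieIdeal_coe_eq_lieSpan_rowGens (Γ := Γ) (0 : Fin (m + 1))
  have hmem (y : Ln (m + 1) Γ) : y ∈ I ↔ y ∈ lieSpan ℤ _ (Ln.rowGens 0) := by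
    rw [← hI]; rfl
  constructor
  · intro hx
    have hσρ := LieHom.congr_fun (Ln.mkQ_comp_map_succEmb_comp ρ hρ0 hρsucc I
      fun y hy => (hmem y).2 (subset_lieSpan hy)) x
    rw [LieHom.mem_ker] at hx
    rw [← hmem, ← I.mkQ_eq_zero, ← hσρ]
    simp [hx]
  · refine fun hx => (lieSpan_le (K := ρ.ker.toLieSubalgebra)).2 ?_ hx
    rintro _ ⟨j, hj, γ, rfl⟩
    exact hρ0 j hj γ

/-- For `n = m + 1 ≥ 3`, if `ρ̃ : L_n(Γ) → L_{n-1}(Γ)` is the Lie algebra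
homomorphism determined by `ρ̃(t_{1,j,γ}) = 0` and `ρ̃(t_{i,j,γ}) = t_{i-1,j-1,γ}` for
`i, j ≥ 2`, then its kernel equals the Lie subalgebra of `L_n(Γ)` generated by the set
`{t_{1,j,γ} : 2 ≤ j ≤ n, γ ∈ Γ}`. -/
theorem statement8 (Γ : Type*) [Group Γ] (m : ℕ) (hm : 2 ≤ m)
    (ρ : Ln (m + 1) Γ →ₗ⁅ℤ⁆ Ln m Γ)
    (hρ0 : ∀ (j : Fin (m + 1)) (hj : (0 : Fin (m + 1)) ≠ j) (γ : Γ),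
      ρ (tL (m + 1) Γ 0 j γ hj) = 0)
    (hρsucc : ∀ (i j : Fin m) (hij : i ≠ j) (γ : Γ),
      ρ (tL (m + 1) Γ i.succ j.succ γ (fun h => hij (Fin.succ_injective m h))) =
        tL m Γ i j γ hij) :
    ∀ x : Ln (m + 1) Γ,
      x ∈ ρ.ker ↔
        x ∈ LieSubalgebra.lieSpan ℤ (Ln (m + 1) Γ)
          {y | ∃ (j : Fin (m + 1)) (hj : (0 : Fin (m + 1)) ≠ j) (γ : Γ),
            y = tL (m + 1) Γ 0 j γ hj} :=
  statement8_general Γ m ρ hρ0 hρsucc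
end
end

section
/- Fix a group Γ and an integer n ≥ 2. The ℤ-algebra A_n(Γ) is spanned as a ℤ-module by the images of the monomials t_{i_1,j_1,γ_1}·t_{i_2,j_2,γ_2}⋯t_{i_d,j_d,γ_d} with d ≥ 0 (the empty product being 1), where 1 ≤ i_k < j_k ≤ n and γ_k ∈ Γ for each k, and i_1 ≤ i_2 ≤ ⋯ ≤ i_d. -/
noncomputable section

/-- The generator `t_{i,j,γ}` of the free associative `ℤ`-algebra. -/
def faGen (n : ℕ) (Γ : Type*) (i j : Fin n) (γ : Γ) (h : i ≠ j) :
    FreeAlgebra ℤ (Idx n Γ) :=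
  FreeAlgebra.ι ℤ ⟨(i, j, γ), h⟩

/-- The relations (A0), (A1), (A2) defining `A_n(Γ)`. -/
inductive ARel (n : ℕ) (Γ : Type*) [Group Γ] :
    FreeAlgebra ℤ (Idx n Γ) → FreeAlgebra ℤ (Idx n Γ) → Prop
  | inv : ∀ (i j : Fin n) (γ : Γ) (h : i ≠ j),
      ARel n Γ (faGen n Γ i j γ h) (faGen n Γ j i γ⁻¹ h.symm)
  | comm : ∀ (i j k l : Fin n) (γ δ : Γ) (hij : i ≠ j) (hkl : k ≠ l),
      i ≠ k → i ≠ l → j ≠ k → j ≠ l →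
      ARel n Γ (faGen n Γ i j γ hij * faGen n Γ k l δ hkl)
               (faGen n Γ k l δ hkl * faGen n Γ i j γ hij)
  | inf : ∀ (i j k : Fin n) (γ δ : Γ) (hij : i ≠ j) (hjk : j ≠ k) (hik : i ≠ k),
      ARel n Γ (faGen n Γ i j γ hij * (faGen n Γ j k δ hjk + faGen n Γ i k (γ * δ) hik))
               ((faGen n Γ j k δ hjk + faGen n Γ i k (γ * δ) hik) * faGen n Γ i j γ hij)

/-- The associative unital `ℤ`-algebra `A_n(Γ)`: the quotient of the free `ℤ`-algebra on the
symbols `t_{i,j,γ}` by the two-sided ideal generated by the relations (A0), (A1), (A2). -/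
abbrev An (n : ℕ) (Γ : Type*) [Group Γ] := RingQuot (ARel n Γ)

/-- The generator `t_{i,j,γ}` of `A_n(Γ)`. -/
def tA (n : ℕ) (Γ : Type*) [Group Γ] (i j : Fin n) (γ : Γ) (h : i ≠ j) : An n Γ :=
  RingQuot.mkAlgHom ℤ (ARel n Γ) (faGen n Γ i j γ h)

/-! Let `S_c` be the span of monomials sorted by first index with all first indices `≥ c`.
By induction on the length of a sorted monomial `t_{i,j} m`, left multiplication by `t_{a,b}`
with `c ≤ a < b` stays in `S_c`: for `a ≤ i` the product is already sorted, and otherwise (A1) or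
(A2) rewrites `t_{a,b} t_{i,j}` as a combination of products `t_{i,·} t_{·,·}` whose second factor
meets the shorter monomial `m`. The only term of the same length, `t_{a,j} t_{i,a}` in the case
`b = j`, is handled by the case `a = j` that precedes it. So `S_0` is a left ideal containing
`1`, hence everything. -/

namespace An

section SortedLists

variable {n : ℕ} {Γ : Type*}

abbrev Label (n : ℕ) (Γ : Type*) := {p : Fin n × Fin n × Γ // p.1 < p.2.1}

-- The bound `c` is a natural number so that `c = 0` is available for every `n`.
def IsSortedFrom (c : ℕ) (L : List (Label n Γ)) : Prop :=
  (c :: L.map fun p => (p.1.1 : ℕ)).IsChain (· ≤ ·)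

@[simp] theorem isSortedFrom_nil (c : ℕ) : IsSortedFrom c ([] : List (Label n Γ)) := by
  simp [IsSortedFrom]

@[simp] theorem isSortedFrom_cons {c : ℕ} {p : Label n Γ} {L : List (Label n Γ)} :
    IsSortedFrom c (p :: L) ↔ c ≤ p.1.1 ∧ IsSortedFrom p.1.1 L := by
  simp [IsSortedFrom]

theorem IsSortedFrom.anti {c d : ℕ} {L : List (Label n Γ)} (hcd : c ≤ d)
    (hL : IsSortedFrom d L) : IsSortedFrom c L := by
  cases L with
  | nil => simp
  | cons p L =>
    obtain ⟨hdp, hL⟩ := isSortedFrom_cons.1 hL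
    exact isSortedFrom_cons.2 ⟨hcd.trans hdp, hL⟩

theorem IsSortedFrom.monotone {c : ℕ} {L : List (Label n Γ)} (hL : IsSortedFrom c L) :
    Monotone fun k : Fin L.length => L[k].1.1 := by
  have h : (L.map fun p => (p.1.1 : ℕ)).SortedLE := hL.tail.sortedLE
  rw [← List.ofFn_getElem_eq_map, List.sortedLE_ofFn_iff] at h
  exact fun _ _ hkl => h hkl

end SortedLists

variable {n : ℕ} {Γ : Type*} [Group Γ]

theorem tA_eq_tA_inv (i j : Fin n) (γ : Γ) (h : i ≠ j) :
    tA n Γ i j γ h = tA n Γ j i γ⁻¹ h.symm :=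
  RingQuot.mkAlgHom_rel ℤ (ARel.inv i j γ h)

theorem tA_mul_tA_comm {i j k l : Fin n} (γ δ : Γ) (hij : i ≠ j) (hkl : k ≠ l)
    (hik : i ≠ k) (hil : i ≠ l) (hjk : j ≠ k) (hjl : j ≠ l) :
    tA n Γ i j γ hij * tA n Γ k l δ hkl = tA n Γ k l δ hkl * tA n Γ i j γ hij := by
  simpa only [tA, map_mul] using
    RingQuot.mkAlgHom_rel ℤ (ARel.comm i j k l γ δ hij hkl hik hil hjk hjl)

theorem tA_mul_add_comm {i j k : Fin n} (γ δ : Γ) (hij : i ≠ j) (hjk : j ≠ k) (hik : i ≠ k) :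
    tA n Γ i j γ hij * (tA n Γ j k δ hjk + tA n Γ i k (γ * δ) hik)
      = (tA n Γ j k δ hjk + tA n Γ i k (γ * δ) hik) * tA n Γ i j γ hij := by
  simpa only [tA, map_mul, map_add] using
    RingQuot.mkAlgHom_rel ℤ (ARel.inf i j k γ δ hij hjk hik)

theorem tA_mul_tA_of_adjacent {i j k : Fin n} (γ δ : Γ) (hij : i ≠ j) (hjk : j ≠ k)
    (hik : i ≠ k) :
    tA n Γ j k δ hjk * tA n Γ i j γ hij =
      tA n Γ i j γ hij * tA n Γ j k δ hjk + tA n Γ i j γ hij * tA n Γ i k (γ * δ) hik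
        - tA n Γ i k (γ * δ) hik * tA n Γ i j γ hij := by
  rw [eq_sub_iff_add_eq, ← add_mul, ← tA_mul_add_comm, mul_add]

theorem tA_mul_tA_of_same_target {i a j : Fin n} (γ δ : Γ) (hia : i ≠ a) (haj : a ≠ j)
    (hij : i ≠ j) :
    tA n Γ a j γ haj * tA n Γ i j δ hij =
      tA n Γ i j δ hij * tA n Γ a j γ haj + tA n Γ i a (δ * γ⁻¹) hia * tA n Γ a j γ haj
        - tA n Γ a j γ haj * tA n Γ i a (δ * γ⁻¹) hia := by
  have h := tA_mul_add_comm γ δ⁻¹ haj hij.symm hia.symm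
  have e : tA n Γ a i (γ * δ⁻¹) hia.symm = tA n Γ i a (δ * γ⁻¹) hia := by
    rw [tA_eq_tA_inv i a _ hia, mul_inv_rev, inv_inv]
  rw [← tA_eq_tA_inv i j δ hij, e] at h
  rw [eq_sub_iff_add_eq, ← mul_add, h, add_mul]

def Label.gen (p : Label n Γ) : An n Γ := tA n Γ p.1.1 p.1.2.1 p.1.2.2 p.2.ne

def monomial (L : List (Label n Γ)) : An n Γ := (L.map Label.gen).prod

@[simp] theorem monomial_cons (p : Label n Γ) (L : List (Label n Γ)) :
    monomial (p :: L) = p.gen * monomial L := List.prod_cons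

def sortedSpan (c : ℕ) : Submodule ℤ (An n Γ) :=
  Submodule.span ℤ {x | ∃ L, IsSortedFrom c L ∧ monomial L = x}

theorem monomial_mem_sortedSpan {c : ℕ} {L : List (Label n Γ)} (hL : IsSortedFrom c L) :
    monomial L ∈ sortedSpan c :=
  Submodule.subset_span ⟨L, hL, rfl⟩

theorem sortedSpan_antitone : Antitone (sortedSpan : ℕ → Submodule ℤ (An n Γ)) :=
  fun _ _ hcd => Submodule.span_mono fun _ ⟨L, hL, hx⟩ => ⟨L, hL.anti hcd, hx⟩

theorem tA_mul_mem_sortedSpan {i j : Fin n} (δ : Γ) (hij : i < j) {x : An n Γ}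
    (hx : x ∈ sortedSpan i) : tA n Γ i j δ hij.ne * x ∈ sortedSpan i := by
  refine (Submodule.span_le (p := (sortedSpan i).comap (LinearMap.mulLeft ℤ _))).2 ?_ hx
  rintro _ ⟨L, hL, rfl⟩
  exact monomial_mem_sortedSpan (L := ⟨(i, j, δ), hij⟩ :: L) (isSortedFrom_cons.2 ⟨le_rfl, hL⟩)

def MulLeftStable (c : ℕ) (x : An n Γ) : Prop :=
  ∀ (a b : Fin n) (γ : Γ) (hab : a < b), c ≤ a → tA n Γ a b γ hab.ne * x ∈ sortedSpan c

section Reordering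

variable {i j : Fin n} (δ : Γ) (hij : i < j) {x : An n Γ}

theorem tA_mul_tA_mul_mem_of_adjacent (hx : x ∈ sortedSpan i) (hxs : MulLeftStable i x)
    {b : Fin n} (γ : Γ) (hjb : j < b) :
    tA n Γ j b γ hjb.ne * (tA n Γ i j δ hij.ne * x) ∈ sortedSpan i := by
  have hib := hij.trans hjb
  rw [← mul_assoc, tA_mul_tA_of_adjacent δ γ hij.ne hjb.ne hib.ne, sub_mul, add_mul,
    mul_assoc, mul_assoc, mul_assoc]
  exact sub_mem (add_mem (tA_mul_mem_sortedSpan δ hij (hxs j b γ hjb hij.le))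
    (tA_mul_mem_sortedSpan δ hij (hxs i b _ hib le_rfl)))
    (tA_mul_mem_sortedSpan _ hib (tA_mul_mem_sortedSpan δ hij hx))

theorem tA_mul_tA_mul_mem_of_same_target (hx : x ∈ sortedSpan i) (hxs : MulLeftStable i x)
    {a : Fin n} (γ : Γ) (hia : i < a) (haj : a < j) :
    tA n Γ a j γ haj.ne * (tA n Γ i j δ hij.ne * x) ∈ sortedSpan i := by
  rw [← mul_assoc, tA_mul_tA_of_same_target γ δ hia.ne haj.ne hij.ne, sub_mul, add_mul,
    mul_assoc, mul_assoc, mul_assoc]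
  exact sub_mem (add_mem (tA_mul_mem_sortedSpan δ hij (hxs a j γ haj hia.le))
    (tA_mul_mem_sortedSpan _ hia (hxs a j γ haj hia.le)))
    (tA_mul_tA_mul_mem_of_adjacent _ hia hx hxs γ haj)

theorem tA_mul_tA_mul_mem_of_disjoint (hxs : MulLeftStable i x) {a b : Fin n} (γ : Γ)
    (hia : i < a) (hab : a < b) (haj : a ≠ j) (hbj : b ≠ j) :
    tA n Γ a b γ hab.ne * (tA n Γ i j δ hij.ne * x) ∈ sortedSpan i := by
  rw [← mul_assoc, tA_mul_tA_comm γ δ hab.ne hij.ne hia.ne' haj (hia.trans hab).ne' hbj,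
    mul_assoc]
  exact tA_mul_mem_sortedSpan δ hij (hxs a b γ hab hia.le)

theorem tA_mul_tA_mul_mem (hx : x ∈ sortedSpan i) (hxs : MulLeftStable i x) {a b : Fin n}
    (γ : Γ) (hia : i < a) (hab : a < b) :
    tA n Γ a b γ hab.ne * (tA n Γ i j δ hij.ne * x) ∈ sortedSpan i := by
  rcases eq_or_ne a j with rfl | haj
  · exact tA_mul_tA_mul_mem_of_adjacent δ hij hx hxs γ hab
  rcases eq_or_ne b j with rfl | hbj
  · exact tA_mul_tA_mul_mem_of_same_target δ hij hx hxs γ hia hab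
  exact tA_mul_tA_mul_mem_of_disjoint δ hij hxs γ hia hab haj hbj

end Reordering

theorem mulLeftStable_monomial {c : ℕ} {L : List (Label n Γ)} (hL : IsSortedFrom c L) :
    MulLeftStable c (monomial L) := by
  induction L generalizing c with
  | nil =>
    intro a b γ hab hca
    exact monomial_mem_sortedSpan (L := [⟨(a, b, γ), hab⟩]) (by simpa using hca)
  | cons q L ih =>
    obtain ⟨⟨i, j, δ⟩, hij⟩ := q
    obtain ⟨hci, hL⟩ := isSortedFrom_cons.1 hL
    intro a b γ hab hca
    rcases le_or_gt a i with hai | hia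
    · exact monomial_mem_sortedSpan (L := ⟨(a, b, γ), hab⟩ :: ⟨(i, j, δ), hij⟩ :: L)
        (by simpa using ⟨hca, hai, hL⟩)
    · exact sortedSpan_antitone hci
        (tA_mul_tA_mul_mem δ hij (monomial_mem_sortedSpan hL) (ih hL) γ hia hab)

theorem tA_mul_mem_sortedSpan_zero (i j : Fin n) (γ : Γ) (h : i ≠ j) {x : An n Γ}
    (hx : x ∈ sortedSpan 0) : tA n Γ i j γ h * x ∈ sortedSpan 0 := by
  have upper : ∀ (a b : Fin n) (γ : Γ) (hab : a < b), tA n Γ a b γ hab.ne * x ∈ sortedSpan 0 := by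
    intro a b γ hab
    refine (Submodule.span_le (p := (sortedSpan 0).comap (LinearMap.mulLeft ℤ _))).2 ?_ hx
    rintro _ ⟨L, hL, rfl⟩
    exact mulLeftStable_monomial hL a b γ hab (Nat.zero_le _)
  rcases h.lt_or_gt with hij | hji
  · exact upper i j γ hij
  · rw [tA_eq_tA_inv]
    exact upper j i γ⁻¹ hji

theorem mem_sortedSpan_zero (x : An n Γ) : x ∈ sortedSpan 0 := by
  obtain ⟨y, rfl⟩ := RingQuot.mkAlgHom_surjective ℤ (ARel n Γ) x
  suffices ∀ z ∈ sortedSpan 0, RingQuot.mkAlgHom ℤ (ARel n Γ) y * z ∈ sortedSpan 0 by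
    simpa using this 1 (monomial_mem_sortedSpan (L := []) (isSortedFrom_nil 0))
  induction y using FreeAlgebra.induction with
  | grade0 r =>
    intro z hz
    rw [AlgHom.commutes, Algebra.algebraMap_eq_smul_one, smul_one_mul]
    exact Submodule.smul_mem _ r hz
  | grade1 p => exact fun z hz => tA_mul_mem_sortedSpan_zero _ _ _ p.2 hz
  | mul a b ha hb =>
    intro z hz
    rw [map_mul, mul_assoc]
    exact ha _ (hb z hz)
  | add a b ha hb =>
    intro z hz
    rw [map_add, add_mul]
    exact add_mem (ha z hz) (hb z hz)

end An

theorem statement9_general (Γ : Type*) [Group Γ] (n : ℕ) :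
    Submodule.span ℤ
      {x : An n Γ | ∃ (d : ℕ) (i j : Fin d → Fin n) (γ : Fin d → Γ)
        (hij : ∀ k, i k < j k), Monotone i ∧
        x = (List.ofFn fun k : Fin d => tA n Γ (i k) (j k) (γ k) (hij k).ne).prod} = ⊤ := by
  refine eq_top_iff.2 fun x _ => (Submodule.span_le.2 ?_) (An.mem_sortedSpan_zero x)
  rintro _ ⟨L, hL, rfl⟩
  refine Submodule.subset_span ⟨L.length, fun k => L[k].1.1, fun k => L[k].1.2.1,
    fun k => L[k].1.2.2, fun k => L[k].2, hL.monotone, ?_⟩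
  rw [An.monomial, ← List.ofFn_getElem_eq_map]
  rfl

/-- The `ℤ`-algebra `A_n(Γ)` is spanned as a `ℤ`-module by the monomials
`t_{i₁,j₁,γ₁} ⋯ t_{i_d,j_d,γ_d}` with `i_k < j_k` for all `k` and `i₁ ≤ i₂ ≤ ⋯ ≤ i_d`
(the empty product, `d = 0`, being `1`). -/
theorem statement9 (Γ : Type*) [Group Γ] (n : ℕ) (hn : 2 ≤ n) :
    Submodule.span ℤ
      {x : An n Γ | ∃ (d : ℕ) (i j : Fin d → Fin n) (γ : Fin d → Γ)
        (hij : ∀ k, i k < j k), Monotone i ∧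
        x = (List.ofFn fun k : Fin d => tA n Γ (i k) (j k) (γ k) (hij k).ne).prod} = ⊤ :=
  statement9_general Γ n
end
end
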